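/- Let Q_1, Q_2, … be a sequence of DMCs with inf_ℓ C(Q_ℓ) > 0. Then there exists a constant c > 0 such that, for the line network of length L whose ℓ-th link is Q_ℓ, batched codes with batch size M = O(1) and inner block-length N = O(1) (in fact with M = N = 1 and binary batch alphabet) achieve a rate that is Ω(e^{−cL}) as L→∞. -/
import Mathlib


open scoped BigOperators

def IsDist {α : Type*} [Fintype α] (p : α → ℝ) : Prop :=
  (∀ x, 0 ≤ p x) ∧ ∑ x, p x = 1

def IsStoch {α β : Type*} [Fintype α] [Fintype β] (W : Matrix α β ℝ) : Prop :=
  ∀ x, (∀ y, 0 ≤ W x y) ∧ ∑ y, W x y = 1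

/-- Mutual information `I(p, W)` (base-2 logarithm) between the input of channel `W`,
distributed according to `p`, and the corresponding output. -/
noncomputable def mutualInfo {α β : Type*} [Fintype α] [Fintype β]
    (p : α → ℝ) (W : Matrix α β ℝ) : ℝ :=
  ∑ x, ∑ y, p x * W x y * Real.logb 2 (W x y / ∑ x', p x' * W x' y)

/-- `N`-fold memoryless extension `Q^{⊗N}` of a channel. -/
noncomputable def tensorPow {α β : Type*} [Fintype α] [Fintype β] (N : ℕ)
    (Q : Matrix α β ℝ) : Matrix (Fin N → α) (Fin N → β) ℝ :=
  Matrix.of fun u y => ∏ i, Q (u i) (y i)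

/-- `chain Q Φ n = Q 0 * Φ 0 * Q 1 * Φ 1 * ⋯ * Q n`. -/
noncomputable def chain {β γ : Type*} [Fintype β] [Fintype γ]
    (Q : ℕ → Matrix β γ ℝ) (Φ : ℕ → Matrix γ β ℝ) : ℕ → Matrix β γ ℝ
  | 0 => Q 0
  | (n+1) => chain Q Φ n * Φ n * Q (n+1)

/-- End-to-end transition matrix `W_L = F Q₁^{⊗N} Φ₁ Q₂^{⊗N} ⋯ Φ_{L-1} Q_L^{⊗N}` of a
batched code with batch alphabet `A`, batch size `M`, inner block-length `N`,
over the line network of length `L` whose `ℓ`-th link is the DMC `Q (ℓ-1)` (0-indexed). -/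
noncomputable def endToEnd {A Qi Qo : Type*} [Fintype A] [Fintype Qi] [Fintype Qo]
    (L M N : ℕ)
    (F : Matrix (Fin M → A) (Fin N → Qi) ℝ)
    (Q : ℕ → Matrix Qi Qo ℝ)
    (Φ : ℕ → Matrix (Fin N → Qo) (Fin N → Qi) ℝ) :
    Matrix (Fin M → A) (Fin N → Qo) ℝ :=
  F * chain (fun ℓ => tensorPow N (Q ℓ)) Φ (L - 1)

/-- Shannon capacity of a DMC, as the supremum of mutual information over input
distributions. -/
noncomputable def capacity {α β : Type*} [Fintype α] [Fintype β] (W : Matrix α β ℝ) : ℝ :=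
  sSup {I : ℝ | ∃ p : α → ℝ, IsDist p ∧ I = mutualInfo p W}

/-! ### Auxiliary lemmas -/


/-- Deterministic channel given by a function. -/
noncomputable def detM {α β : Type*} [Fintype α] [Fintype β] [DecidableEq β]
    (g : α → β) : Matrix α β ℝ :=
  Matrix.of fun x y => if y = g x then (1:ℝ) else 0

lemma isStoch_detM {α β : Type*} [Fintype α] [Fintype β] [DecidableEq β] (g : α → β) :
    IsStoch (detM g) := by
  intro x
  refine ⟨fun y => by dsimp [detM]; positivity, ?_⟩
  simp [detM]

lemma isStoch_mul {α β γ : Type*} [Fintype α] [Fintype β] [Fintype γ]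
    {A : Matrix α β ℝ} {B : Matrix β γ ℝ} (hA : IsStoch A) (hB : IsStoch B) :
    IsStoch (A * B) := by
  intro x
  constructor
  · intro y
    rw [Matrix.mul_apply]
    exact Finset.sum_nonneg fun z _ => mul_nonneg ((hA x).1 z) ((hB z).1 y)
  · simp only [Matrix.mul_apply]
    rw [Finset.sum_comm]
    have : ∀ z ∈ Finset.univ, ∑ y : γ, A x z * B z y = A x z := by
      intro z _
      rw [← Finset.mul_sum, (hB z).2, mul_one]
    rw [Finset.sum_congr rfl this, (hA x).2]

lemma sum_fin1 {α : Type*} [Fintype α] (f : (Fin 1 → α) → ℝ) :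
    ∑ x, f x = ∑ a, f (fun _ => a) := by
  rw [← (Equiv.funUnique (Fin 1) α).symm.sum_comp f]
  rfl

lemma tensorPow_one_apply {α β : Type*} [Fintype α] [Fintype β] (Q : Matrix α β ℝ)
    (u : Fin 1 → α) (y : Fin 1 → β) : tensorPow 1 Q u y = Q (u 0) (y 0) := by
  simp [tensorPow]

lemma isStoch_tensorPow_one {α β : Type*} [Fintype α] [Fintype β]
    {Q : Matrix α β ℝ} (hQ : IsStoch Q) : IsStoch (tensorPow 1 Q) := by
  intro u
  constructor
  · intro y; rw [tensorPow_one_apply]; exact (hQ (u 0)).1 (y 0)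
  · rw [Finset.sum_congr rfl (fun y _ => tensorPow_one_apply Q u y),
      sum_fin1 (fun y => Q (u 0) (y 0))]
    exact (hQ (u 0)).2

lemma entry_le_one {α β : Type*} [Fintype α] [Fintype β]
    {W : Matrix α β ℝ} (hW : IsStoch W) (x : α) (y : β) : W x y ≤ 1 := by
  calc W x y ≤ ∑ y', W x y' :=
        Finset.single_le_sum (fun y' _ => (hW x).1 y') (Finset.mem_univ y)
    _ = 1 := (hW x).2

lemma detM_mul_tensor {α Qi Qo : Type*} [Fintype α] [Fintype Qi] [Fintype Qo]
    [DecidableEq (Fin 1 → Qi)]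
    (g : α → Qi) (Q' : Matrix Qi Qo ℝ) (x : α) (y : Fin 1 → Qo) :
    (detM (fun x => (fun _ => g x : Fin 1 → Qi)) * tensorPow 1 Q') x y
      = Q' (g x) (y 0) := by
  rw [Matrix.mul_apply]
  simp only [detM, Matrix.of_apply, ite_mul, one_mul, zero_mul]
  rw [Finset.sum_ite_eq' Finset.univ (fun _ => g x) (fun u => tensorPow 1 Q' u y)]
  simp [tensorPow_one_apply]

lemma step_entry {Qi Qo : Type*} [Fintype Qi] [Fintype Qo]
    [DecidableEq (Fin 1 → Qi)] [DecidableEq Qo]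
    (Wn : Matrix (Fin 1 → Bool) (Fin 1 → Qo) ℝ) (hWn : IsStoch Wn)
    (Q' : Matrix Qi Qo ℝ) (ysn : Qo) (a0 a1 : Qi) (b : Fin 1 → Bool) (y : Fin 1 → Qo) :
    (Wn * detM (fun (w : Fin 1 → Qo) => (fun _ => if w 0 = ysn then a0 else a1 : Fin 1 → Qi))
      * tensorPow 1 Q') b y
    = Wn b (fun _ => ysn) * Q' a0 (y 0) + (1 - Wn b (fun _ => ysn)) * Q' a1 (y 0) := by
  rw [Matrix.mul_assoc]
  have hM : ∀ z : Fin 1 → Qo,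
      (detM (fun (w : Fin 1 → Qo) => (fun _ => if w 0 = ysn then a0 else a1 : Fin 1 → Qi)) *
        tensorPow 1 Q') z y = Q' (if z 0 = ysn then a0 else a1) (y 0) :=
    fun z => detM_mul_tensor (fun w => if w 0 = ysn then a0 else a1) Q' z y
  rw [Matrix.mul_apply, Finset.sum_congr rfl (fun z _ => by rw [hM z])]
  rw [sum_fin1 (fun z => Wn b z * Q' (if z 0 = ysn then a0 else a1) (y 0))]
  beta_reduce
  have hsplit : ∀ w : Qo, Wn b (fun _ => w) * Q' (if w = ysn then a0 else a1) (y 0)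
      = Wn b (fun _ => w) * Q' a1 (y 0) +
        (if w = ysn then Wn b (fun _ => w) * (Q' a0 (y 0) - Q' a1 (y 0)) else 0) := by
    intro w; split <;> ring
  rw [Finset.sum_congr rfl (fun w _ => hsplit w), Finset.sum_add_distrib,
    Finset.sum_ite_eq' Finset.univ ysn (fun w => Wn b (fun _ => w) * (Q' a0 (y 0) - Q' a1 (y 0)))]
  have hrow : ∑ w : Qo, Wn b (fun _ => w) = 1 := by
    rw [← sum_fin1 (fun z => Wn b z)]
    exact (hWn b).2
  rw [← Finset.sum_mul, hrow]
  simp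
  ring

lemma core_ineq {u v : ℝ} (hu : 0 ≤ u) (hv : 0 ≤ v) :
    (Real.sqrt u - Real.sqrt v)^2 / 2 ≤
      u * Real.log (u / ((u+v)/2)) + v * Real.log (v / ((u+v)/2)) := by
  rcases eq_or_lt_of_le hu with h0 | hu'
  · rcases eq_or_lt_of_le hv with h1 | hv'
    · simp [← h0, ← h1]
    · rw [← h0]
      simp only [zero_mul, zero_add, zero_div, Real.log_zero, mul_zero]
      have : v / (v/2) = 2 := by field_simp
      rw [this, Real.sqrt_zero]
      have h2 : (0 - Real.sqrt v)^2 = v := by rw [zero_sub, neg_sq, Real.sq_sqrt hv]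
      rw [h2]
      nlinarith [Real.log_two_gt_d9, hv]
  rcases eq_or_lt_of_le hv with h1 | hv'
  · rw [← h1]
    simp only [zero_mul, add_zero, zero_div, Real.log_zero, mul_zero]
    have : u / (u/2) = 2 := by field_simp
    rw [this, Real.sqrt_zero, sub_zero, Real.sq_sqrt hu]
    nlinarith [Real.log_two_gt_d9, hu]
  · set m := (u+v)/2 with hm
    have hm' : 0 < m := by positivity
    have key : ∀ w : ℝ, 0 < w → 2*w - 2*(Real.sqrt w * Real.sqrt m) ≤ w * Real.log (w/m) := by
      intro w hw
      have hs : 0 < Real.sqrt (m/w) := Real.sqrt_pos.2 (by positivity)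
      have h3 : Real.log (Real.sqrt (m/w)) ≤ Real.sqrt (m/w) - 1 :=
        Real.log_le_sub_one_of_pos hs
      have h4 : Real.log (w/m) = -2 * Real.log (Real.sqrt (m/w)) := by
        rw [Real.log_sqrt (by positivity), Real.log_div (ne_of_gt hw) (ne_of_gt hm'),
          Real.log_div (ne_of_gt hm') (ne_of_gt hw)]
        ring
      have h5 : w * Real.sqrt (m/w) = Real.sqrt w * Real.sqrt m := by
        rw [Real.sqrt_div hm'.le]
        have : w * (Real.sqrt m / Real.sqrt w) = (w / Real.sqrt w) * Real.sqrt m := by ring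
        rw [this, Real.div_sqrt]
      nlinarith [mul_le_mul_of_nonneg_left h3 hw.le, h5]
    have k1 := key u hu'
    have k2 := key v hv'
    set a := Real.sqrt u
    set b := Real.sqrt v
    set s := Real.sqrt m
    have ha : a^2 = u := Real.sq_sqrt hu
    have hb : b^2 = v := Real.sq_sqrt hv
    have hs2 : s^2 = m := Real.sq_sqrt (le_of_lt hm')
    have ha0 : 0 ≤ a := Real.sqrt_nonneg u
    have hb0 : 0 ≤ b := Real.sqrt_nonneg v
    have hs0 : 0 ≤ s := Real.sqrt_nonneg m
    have hsum : 2 * s^2 = a^2 + b^2 := by rw [hs2, ha, hb, hm]; ring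
    have hge : a + b ≤ 2*s := by nlinarith [sq_nonneg (a-b)]
    nlinarith [sq_nonneg (2*s - a - b), k1, k2]

lemma mutualInfo_le {Qi Qo : Type*} [Fintype Qi] [Fintype Qo] [Nonempty Qo]
    {Q : Matrix Qi Qo ℝ} (hQ : IsStoch Q) {p : Qi → ℝ} (hp : IsDist p)
    {δ : ℝ} (hδ : 0 < δ) (h : ∀ x0 x1 y, Q x0 y - Q x1 y ≤ δ) :
    mutualInfo p Q ≤ (Fintype.card Qo) * (δ / Real.log 2) := by
  have hlog2 : (0:ℝ) < Real.log 2 := Real.log_pos (by norm_num)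
  rw [mutualInfo, Finset.sum_comm]
  have hy : ∀ y : Qo, ∑ x, p x * Q x y * Real.logb 2 (Q x y / ∑ x', p x' * Q x' y)
      ≤ δ / Real.log 2 := by
    intro y
    set q := ∑ x', p x' * Q x' y with hq
    have hqnn : 0 ≤ q := Finset.sum_nonneg fun x _ => mul_nonneg (hp.1 x) ((hQ x).1 y)
    rcases eq_or_lt_of_le hqnn with h0 | hq'
    · have hall : ∀ x ∈ Finset.univ, p x * Q x y = 0 := by
        rw [← Finset.sum_eq_zero_iff_of_nonneg
          (fun x _ => mul_nonneg (hp.1 x) ((hQ x).1 y))]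
        exact h0.symm
      have : ∀ x ∈ Finset.univ, p x * Q x y * Real.logb 2 (Q x y / q) = 0 := by
        intro x hx; rw [hall x hx, zero_mul]
      rw [Finset.sum_congr rfl this, Finset.sum_const, smul_zero]
      positivity
    · have step : ∀ x, p x * Q x y * Real.logb 2 (Q x y / q)
          ≤ p x * Q x y * (δ / (q * Real.log 2)) := by
        intro x
        have hpq : 0 ≤ p x * Q x y := mul_nonneg (hp.1 x) ((hQ x).1 y)
        rcases eq_or_lt_of_le hpq with h0 | hpos
        · rw [← h0]; simp
        · have hQx : 0 < Q x y := by
            rcases (hp.1 x).lt_or_eq with h1 | h1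
            · by_contra hc
              push_neg at hc
              have : Q x y = 0 := le_antisymm hc ((hQ x).1 y)
              rw [this, mul_zero] at hpos; exact lt_irrefl 0 hpos
            · exfalso; rw [← h1, zero_mul] at hpos; exact lt_irrefl 0 hpos
          have hgap : Q x y - q ≤ δ := by
            have : Q x y - δ ≤ q := by
              rw [hq]
              calc Q x y - δ = ∑ x', p x' * (Q x y - δ) := by
                    rw [← Finset.sum_mul, hp.2, one_mul]
                _ ≤ ∑ x', p x' * Q x' y := by
                    apply Finset.sum_le_sum
                    intro x' _
                    exact mul_le_mul_of_nonneg_left (by linarith [h x x' y]) (hp.1 x')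
            linarith
          have hlb : Real.logb 2 (Q x y / q) ≤ δ / (q * Real.log 2) := by
            have h1 : Real.log (Q x y / q) ≤ δ / q := by
              have h2 := Real.log_le_sub_one_of_pos (show 0 < Q x y / q by positivity)
              have h3 : Q x y / q - 1 = (Q x y - q) / q := by field_simp
              have h4 : (Q x y - q) / q ≤ δ / q := by gcongr
              linarith
            rw [Real.logb, ← div_div]
            gcongr
          exact mul_le_mul_of_nonneg_left hlb hpq
      calc ∑ x, p x * Q x y * Real.logb 2 (Q x y / q)
          ≤ ∑ x, p x * Q x y * (δ / (q * Real.log 2)) := Finset.sum_le_sum fun x _ => step x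
        _ = q * (δ / (q * Real.log 2)) := by rw [← Finset.sum_mul, ← hq]
        _ = δ / Real.log 2 := by field_simp
  calc ∑ y, ∑ x, p x * Q x y * Real.logb 2 (Q x y / ∑ x', p x' * Q x' y)
      ≤ ∑ y : Qo, δ / Real.log 2 := Finset.sum_le_sum fun y _ => hy y
    _ = (Fintype.card Qo) * (δ / Real.log 2) := by
        rw [Finset.sum_const, nsmul_eq_mul, Finset.card_univ]

lemma exists_gap {Qi Qo : Type*} [Fintype Qi] [Fintype Qo] [Nonempty Qi] [Nonempty Qo]
    {Q : Matrix Qi Qo ℝ} (hQ : IsStoch Q) {ε : ℝ} (hε : 0 < ε)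
    (hcap : ε ≤ capacity Q) :
    ∃ x0 x1 y, ε * Real.log 2 / (2 * (Fintype.card Qo)) ≤ Q x0 y - Q x1 y := by
  have hlog2 : (0:ℝ) < Real.log 2 := Real.log_pos (by norm_num)
  have hcard : (0:ℝ) < (Fintype.card Qo : ℝ) := by exact_mod_cast Fintype.card_pos
  set δ : ℝ := ε * Real.log 2 / (2 * (Fintype.card Qo)) with hδdef
  have hδ : 0 < δ := by positivity
  have hne : {I : ℝ | ∃ p : Qi → ℝ, IsDist p ∧ I = mutualInfo p Q}.Nonempty := by
    refine ⟨mutualInfo (fun _ => (Fintype.card Qi : ℝ)⁻¹) Q,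
      ⟨fun _ => (Fintype.card Qi : ℝ)⁻¹, ⟨⟨fun _ => by positivity, ?_⟩, rfl⟩⟩⟩
    have hcardi : (0:ℝ) < (Fintype.card Qi : ℝ) := by exact_mod_cast Fintype.card_pos
    rw [Finset.sum_const, nsmul_eq_mul, Finset.card_univ, mul_inv_cancel₀ (ne_of_gt hcardi)]
  have hlt : ε / 2 < capacity Q := lt_of_lt_of_le (by linarith) hcap
  obtain ⟨I, ⟨p, hp, hI⟩, hI2⟩ := exists_lt_of_lt_csSup hne hlt
  by_contra hc
  push_neg at hc
  have hle : mutualInfo p Q ≤ (Fintype.card Qo) * (δ / Real.log 2) :=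
    mutualInfo_le hQ hp hδ (fun x0 x1 y => le_of_lt (hc x0 x1 y))
  have heq : (Fintype.card Qo : ℝ) * (δ / Real.log 2) = ε / 2 := by
    rw [hδdef]; field_simp
  rw [heq] at hle
  rw [hI] at hI2
  linarith

lemma sum_fin1bool (f : (Fin 1 → Bool) → ℝ) :
    ∑ x, f x = f (fun _ => true) + f (fun _ => false) := by
  rw [sum_fin1 f, Fintype.sum_bool]

lemma binary_lb {γ : Type*} [Fintype γ]
    {W : Matrix (Fin 1 → Bool) γ ℝ} (hW : IsStoch W) {θ : ℝ} (hθ : 0 ≤ θ)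
    {ys : γ} (hdiff : θ ≤ W (fun _ => false) ys - W (fun _ => true) ys) :
    θ^2 / (16 * Real.log 2) ≤ mutualInfo (fun _ => (1:ℝ)/2) W := by
  have hlog2 : (0:ℝ) < Real.log 2 := Real.log_pos (by norm_num)
  set u : γ → ℝ := fun y => W (fun _ => false) y with hu
  set v : γ → ℝ := fun y => W (fun _ => true) y with hv
  have hun : ∀ y, 0 ≤ u y := fun y => (hW _).1 y
  have hvn : ∀ y, 0 ≤ v y := fun y => (hW _).1 y
  have hD : ∀ y : γ, (∑ x', (1:ℝ)/2 * W x' y) = (u y + v y)/2 := by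
    intro y
    rw [sum_fin1bool (fun x' => (1:ℝ)/2 * W x' y)]
    ring
  have hT : ∀ y : γ,
      (Real.sqrt (u y) - Real.sqrt (v y))^2 / (4 * Real.log 2) ≤
      ∑ x, (1:ℝ)/2 * W x y * Real.logb 2 (W x y / ∑ x', (1:ℝ)/2 * W x' y) := by
    intro y
    rw [sum_fin1bool (fun x => (1:ℝ)/2 * W x y * Real.logb 2 (W x y / ∑ x', (1:ℝ)/2 * W x' y)),
      hD y]
    have hcore := core_ineq (hun y) (hvn y)
    simp only [Real.logb]
    have : (1:ℝ)/2 * W (fun _ => true) y *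
          (Real.log (W (fun _ => true) y / ((u y + v y)/2)) / Real.log 2)
        + (1:ℝ)/2 * W (fun _ => false) y *
          (Real.log (W (fun _ => false) y / ((u y + v y)/2)) / Real.log 2)
        = (u y * Real.log (u y / ((u y + v y)/2)) + v y * Real.log (v y / ((u y + v y)/2)))
            / (2 * Real.log 2) := by
      rw [hu, hv]; ring
    rw [this, div_le_div_iff₀ (by positivity) (by positivity)]
    nlinarith [hcore, hlog2]
  have hmi : mutualInfo (fun _ => (1:ℝ)/2) W
      = ∑ y, ∑ x, (1:ℝ)/2 * W x y * Real.logb 2 (W x y / ∑ x', (1:ℝ)/2 * W x' y) := by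
    rw [mutualInfo, Finset.sum_comm]
  rw [hmi]
  have hstep : θ^2 / (16 * Real.log 2) ≤
      (Real.sqrt (u ys) - Real.sqrt (v ys))^2 / (4 * Real.log 2) := by
    have h1 : u ys ≤ 1 := entry_le_one hW _ ys
    have h2 : v ys ≤ 1 := entry_le_one hW _ ys
    set a := Real.sqrt (u ys)
    set b := Real.sqrt (v ys)
    have ha : a^2 = u ys := Real.sq_sqrt (hun ys)
    have hb : b^2 = v ys := Real.sq_sqrt (hvn ys)
    have ha0 : 0 ≤ a := Real.sqrt_nonneg _
    have hb0 : 0 ≤ b := Real.sqrt_nonneg _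
    have ha1 : a ≤ 1 := by nlinarith
    have hb1 : b ≤ 1 := by nlinarith
    have hab : θ ≤ (a - b) * (a + b) := by nlinarith [hdiff]
    have hd0 : 0 ≤ a - b := by nlinarith
    have key : θ/2 ≤ a - b := by nlinarith
    have hsq : θ/2 * (θ/2) ≤ (a-b)*(a-b) := mul_le_mul key key (by linarith) (by linarith)
    rw [div_le_div_iff₀ (by positivity) (by positivity)]
    nlinarith [hsq, hlog2]
  refine le_trans (le_trans hstep (hT ys)) ?_
  exact Finset.single_le_sum
    (fun y _ => le_trans (by positivity) (hT y)) (Finset.mem_univ ys)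

/-- Let `Q₁, Q₂, …` be DMCs with `inf_ℓ C(Q_ℓ) > 0`.  Then there is a
constant `c > 0` such that, for the line network of length `L` whose `ℓ`-th link is
`Q_ℓ`, batched codes with `M = N = 1` and binary batch alphabet achieve a rate
`Ω(e^{-cL})` as `L → ∞`. -/
theorem stmt18 {Qi Qo : Type} [Fintype Qi] [Fintype Qo] [Nonempty Qi] [Nonempty Qo]
    (Q : ℕ → Matrix Qi Qo ℝ) (hQ : ∀ ℓ, IsStoch (Q ℓ))
    (ε : ℝ) (hε : 0 < ε) (hcap : ∀ ℓ, ε ≤ capacity (Q ℓ)) :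
    ∃ c a : ℝ, 0 < c ∧ 0 < a ∧ ∃ L₀ : ℕ, ∀ L : ℕ, L₀ ≤ L →
      ∃ (F : Matrix (Fin 1 → Bool) (Fin 1 → Qi) ℝ)
        (Φ : ℕ → Matrix (Fin 1 → Qo) (Fin 1 → Qi) ℝ)
        (p : (Fin 1 → Bool) → ℝ),
        IsStoch F ∧ (∀ ℓ, IsStoch (Φ ℓ)) ∧ IsDist p ∧
        a * Real.exp (-c * (L : ℝ)) ≤ mutualInfo p (endToEnd L 1 1 F Q Φ) := by
  classical
  have hlog2 : (0:ℝ) < Real.log 2 := Real.log_pos (by norm_num)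
  -- choose gap inputs/outputs for each link
  have H : ∀ ℓ, ∃ x0 x1 y,
      ε * Real.log 2 / (2 * (Fintype.card Qo)) ≤ Q ℓ x0 y - Q ℓ x1 y :=
    fun ℓ => exists_gap (hQ ℓ) hε (hcap ℓ)
  choose x0 x1 ys hgap using H
  set δ : ℝ := ε * Real.log 2 / (2 * (Fintype.card Qo)) with hδdef
  have hcard : (0:ℝ) < (Fintype.card Qo : ℝ) := by exact_mod_cast Fintype.card_pos
  have hδpos : 0 < δ := by rw [hδdef]; positivity
  set δ₀ : ℝ := min δ (1/2) with hδ₀def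
  have hδ₀pos : 0 < δ₀ := lt_min hδpos (by norm_num)
  have hδ₀half : δ₀ ≤ 1/2 := min_le_right _ _
  have hgap' : ∀ ℓ, δ₀ ≤ Q ℓ (x0 ℓ) (ys ℓ) - Q ℓ (x1 ℓ) (ys ℓ) :=
    fun ℓ => le_trans (min_le_left _ _) (hgap ℓ)
  refine ⟨-2 * Real.log δ₀, 1 / (16 * Real.log 2), ?_, by positivity, 1, ?_⟩
  · have : Real.log δ₀ < 0 := Real.log_neg hδ₀pos (by linarith)
    linarith
  intro L hL
  -- the recoding maps
  set F : Matrix (Fin 1 → Bool) (Fin 1 → Qi) ℝ :=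
    detM (fun (b : Fin 1 → Bool) => (fun _ => if b 0 then x1 0 else x0 0 : Fin 1 → Qi))
    with hF
  set Φ : ℕ → Matrix (Fin 1 → Qo) (Fin 1 → Qi) ℝ :=
    fun ℓ => detM (fun (w : Fin 1 → Qo) =>
      (fun _ => if w 0 = ys ℓ then x0 (ℓ+1) else x1 (ℓ+1) : Fin 1 → Qi)) with hΦ
  set Qt : ℕ → Matrix (Fin 1 → Qi) (Fin 1 → Qo) ℝ := fun ℓ => tensorPow 1 (Q ℓ) with hQt
  -- the main induction
  have main : ∀ n : ℕ, IsStoch (F * chain Qt Φ n) ∧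
      δ₀^(n+1) ≤ (F * chain Qt Φ n) (fun _ => false) (fun _ => ys n)
        - (F * chain Qt Φ n) (fun _ => true) (fun _ => ys n) := by
    intro n
    induction n with
    | zero =>
      have hchain0 : chain Qt Φ 0 = Qt 0 := rfl
      constructor
      · rw [hchain0]
        exact isStoch_mul (isStoch_detM _) (isStoch_tensorPow_one (hQ 0))
      · rw [hchain0, hQt]
        have he : ∀ b : Fin 1 → Bool, ∀ y : Fin 1 → Qo,
            (F * tensorPow 1 (Q 0)) b y = Q 0 (if b 0 then x1 0 else x0 0) (y 0) := by
          intro b y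
          rw [hF]
          exact detM_mul_tensor (fun b => if b 0 then x1 0 else x0 0) (Q 0) b y
        rw [he, he]
        simpa using hgap' 0
    | succ n ih =>
      obtain ⟨ihS, ihD⟩ := ih
      have hassoc : F * chain Qt Φ (n+1)
          = (F * chain Qt Φ n) * Φ n * Qt (n+1) := by
        show F * (chain Qt Φ n * Φ n * Qt (n+1)) = _
        rw [← Matrix.mul_assoc, ← Matrix.mul_assoc]
      constructor
      · rw [hassoc]
        exact isStoch_mul (isStoch_mul ihS (isStoch_detM _)) (isStoch_tensorPow_one (hQ (n+1)))
      · rw [hassoc]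
        have he : ∀ b : Fin 1 → Bool,
            ((F * chain Qt Φ n) * Φ n * Qt (n+1)) b (fun _ => ys (n+1))
            = (F * chain Qt Φ n) b (fun _ => ys n) * Q (n+1) (x0 (n+1)) (ys (n+1))
              + (1 - (F * chain Qt Φ n) b (fun _ => ys n)) * Q (n+1) (x1 (n+1)) (ys (n+1)) := by
          intro b
          rw [hΦ, hQt]
          exact step_entry (F * chain Qt Φ n) ihS (Q (n+1)) (ys n) (x0 (n+1)) (x1 (n+1)) b
            (fun _ => ys (n+1))
        rw [he, he]
        have hd := hgap' (n+1)
        set Pf := (F * chain Qt Φ n) (fun _ => false) (fun _ => ys n)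
        set Pt := (F * chain Qt Φ n) (fun _ => true) (fun _ => ys n)
        have hfac : Pf * Q (n+1) (x0 (n+1)) (ys (n+1)) + (1 - Pf) * Q (n+1) (x1 (n+1)) (ys (n+1))
            - (Pt * Q (n+1) (x0 (n+1)) (ys (n+1)) + (1 - Pt) * Q (n+1) (x1 (n+1)) (ys (n+1)))
            = (Pf - Pt) * (Q (n+1) (x0 (n+1)) (ys (n+1)) - Q (n+1) (x1 (n+1)) (ys (n+1))) := by
          ring
        rw [hfac]
        calc δ₀^(n+1+1) = δ₀^(n+1) * δ₀ := by ring
          _ ≤ (Pf - Pt) * (Q (n+1) (x0 (n+1)) (ys (n+1)) - Q (n+1) (x1 (n+1)) (ys (n+1))) := by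
              apply mul_le_mul ihD hd hδ₀pos.le
              exact le_trans (by positivity) ihD
  -- instantiate at n = L - 1
  obtain ⟨hS, hD⟩ := main (L - 1)
  have hL1 : L - 1 + 1 = L := Nat.succ_pred_eq_of_pos hL
  refine ⟨F, Φ, fun _ => 1/2, isStoch_detM _, fun ℓ => isStoch_detM _, ?_, ?_⟩
  · constructor
    · intro _; norm_num
    · rw [sum_fin1bool (fun _ => (1:ℝ)/2)]; norm_num
  · have hW : endToEnd L 1 1 F Q Φ = F * chain Qt Φ (L-1) := rfl
    rw [hW]
    have hDL : δ₀^L ≤ (F * chain Qt Φ (L-1)) (fun _ => false) (fun _ => ys (L-1))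
        - (F * chain Qt Φ (L-1)) (fun _ => true) (fun _ => ys (L-1)) := by
      rw [← hL1]; exact hD
    have hbl := binary_lb hS (by positivity : (0:ℝ) ≤ δ₀^L) hDL
    have hexp : (1 / (16 * Real.log 2)) * Real.exp (-(-2 * Real.log δ₀) * L)
        = (δ₀^L)^2 / (16 * Real.log 2) := by
      have h1 : -(-2 * Real.log δ₀) * (L:ℝ) = ((2*L : ℕ) : ℝ) * Real.log δ₀ := by
        push_cast; ring
      rw [h1, Real.exp_nat_mul, Real.exp_log hδ₀pos]
      rw [pow_mul]
      ring_nf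
    rw [hexp]
    exact hbl
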